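/- (Theorem 3: quantum Fisher information is the minimum variance over purifications.) Let ρ be a d×d density matrix and H_S an Hermitian d×d matrix. (a) For every positive integer m, every matrix M ∈ ℂ^{d×m} with M M† = ρ, and every Hermitian m×m matrix H_A, the unit vector Φ = Σ_{i,j} M_{ij} e_i ⊗ e_j ∈ ℂ^d ⊗ ℂ^m and the Hamiltonian H_tot = H_S ⊗ I_m + I_d ⊗ H_A satisfy 4·(⟨Φ|H_tot²|Φ⟩ − ⟨Φ|H_tot|Φ⟩²) ≥ F_{H_S}(ρ). (b) There exist a matrix M ∈ ℂ^{d×d} with M M† = ρ and an Hermitian d×d matrix H_A for which equality holds, i.e. 4·(⟨Φ|H_tot²|Φ⟩ − ⟨Φ|H_tot|Φ⟩²) = F_{H_S}(ρ). -/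

import Mathlib

open Matrix Complex Filter Kronecker
open scoped ComplexOrder

noncomputable section

/-- n-fold Kronecker power of a matrix, indexed by functions `Fin n → Fin d`. -/
def kronPow {d : ℕ} (X : Matrix (Fin d) (Fin d) ℂ) (n : ℕ) :
    Matrix (Fin n → Fin d) (Fin n → Fin d) ℂ :=
  Matrix.of fun i j => ∏ k, X (i k) (j k)

/-- The `n`-copy (non-interacting) Hamiltonian `Σᵢ I^{⊗(i-1)} ⊗ H ⊗ I^{⊗(n-i)}`. -/
def nCopyHam {d : ℕ} (H : Matrix (Fin d) (Fin d) ℂ) (n : ℕ) :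
    Matrix (Fin n → Fin d) (Fin n → Fin d) ℂ :=
  ∑ k : Fin n, Matrix.of fun i j =>
    H (i k) (j k) * ∏ l ∈ Finset.univ.erase k, (if i l = j l then (1 : ℂ) else 0)

/-- Time evolution unitary `e^{-iHt}`. -/
def timeEvol {m : Type*} [Fintype m] [DecidableEq m] (H : Matrix m m ℂ) (t : ℝ) :
    Matrix m m ℂ :=
  NormedSpace.exp ((-(Complex.I * (t : ℂ))) • H)

/-- Trace norm `‖A‖₁ = Tr √(AᴴA)`. -/
def traceNorm {m : Type*} [Fintype m] [DecidableEq m] (A : Matrix m m ℂ) : ℝ :=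
  (((Matrix.posSemidef_conjTranspose_mul_self A).1.eigenvectorUnitary.1 *
    diagonal (((↑) : ℝ → ℂ) ∘ (√·) ∘ (Matrix.posSemidef_conjTranspose_mul_self A).1.eigenvalues) *
    (star (Matrix.posSemidef_conjTranspose_mul_self A).1.eigenvectorUnitary : Matrix m m ℂ)).trace).re

/-- A quantum channel: a map admitting a Kraus representation. -/
def IsQuantumChannel {m n : Type*} [Fintype m] [DecidableEq m] [Fintype n] [DecidableEq n]
    (E : Matrix m m ℂ → Matrix n n ℂ) : Prop :=
  ∃ (K : ℕ) (A : Fin K → Matrix n m ℂ),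
    (∀ X, E X = ∑ k, A k * X * (A k)ᴴ) ∧ (∑ k, (A k)ᴴ * A k = 1)

/-- Time-translation invariance of a map w.r.t. input/output Hamiltonians. -/
def IsTI {m n : Type*} [Fintype m] [DecidableEq m] [Fintype n] [DecidableEq n]
    (Hin : Matrix m m ℂ) (Hout : Matrix n n ℂ)
    (E : Matrix m m ℂ → Matrix n n ℂ) : Prop :=
  ∀ (t : ℝ) (X : Matrix m m ℂ),
    timeEvol Hout t * E X * timeEvol Hout (-t) =
      E (timeEvol Hin t * X * timeEvol Hin (-t))

/-- Energy variance of a (unit) vector. -/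
def varVec {m : Type*} [Fintype m] (H : Matrix m m ℂ) (ψ : m → ℂ) : ℝ :=
  (star ψ ⬝ᵥ ((H * H) *ᵥ ψ)).re - ((star ψ ⬝ᵥ (H *ᵥ ψ)).re) ^ 2

/-- The quantum Fisher information formula for a given spectral decomposition data. -/
def qfiOf {m : Type*} [Fintype m] (H : Matrix m m ℂ) (p : m → ℝ) (φ : m → m → ℂ) : ℝ :=
  2 * ∑ j, ∑ k,
    if 0 < p j + p k then
      (p j - p k) ^ 2 / (p j + p k) * Complex.normSq (star (φ j) ⬝ᵥ (H *ᵥ φ k))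
    else 0

/-- Quantum Fisher information of a Hermitian (e.g. density) matrix `ρ` w.r.t. `H`. -/
def QFI {m : Type*} [Fintype m] [DecidableEq m] {ρ : Matrix m m ℂ}
    (hρ : ρ.IsHermitian) (H : Matrix m m ℂ) : ℝ :=
  qfiOf H hρ.eigenvalues (fun j i => hρ.eigenvectorBasis j i)

open scoped Classical in
/-- Total positive-semidefinite square root (zero on non-PSD inputs). -/
def msqrt {m : Type*} [Fintype m] [DecidableEq m] (A : Matrix m m ℂ) : Matrix m m ℂ :=
  if h : A.PosSemidef then
    h.1.eigenvectorUnitary.1 * diagonal (((↑) : ℝ → ℂ) ∘ (√·) ∘ h.1.eigenvalues) *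
      (star h.1.eigenvectorUnitary : Matrix m m ℂ) else 0

/-- Fidelity `Fid(ρ,σ) = (Tr √(√ρ σ √ρ))² = ‖√σ √ρ‖₁²`. -/
def fid {m : Type*} [Fintype m] [DecidableEq m] (ρ σ : Matrix m m ℂ) : ℝ :=
  (traceNorm (msqrt σ * msqrt ρ)) ^ 2

/-- Density matrix. -/
def IsDensityMatrix {m : Type*} [Fintype m] (ρ : Matrix m m ℂ) : Prop :=
  ρ.PosSemidef ∧ ρ.trace = 1

/-!
Write `Φ = vec M`, so that `H_tot Φ = vec (H_S M + M H_Aᵀ)`. Subtracting the mean energy from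
`H_A` turns the variance into the squared norm `‖H_S M + M B‖²` for a Hermitian `B`. In the
eigenbasis `U` of `ρ`, the rows of `N = U† M` are orthogonal with squared norms `p_j`, so Bessel's
inequality bounds this norm below by `Σ_{k,j} |T_kj|² / p_j`, where `T = h diag(p) + S` with
`h = U† H_S U` and `S = N B N†` Hermitian. Each pair of terms `(j,k), (k,j)` is a quadratic in
`S_jk` whose minimum is `(p_j - p_k)² / (p_j + p_k) |h_jk|²`, giving the lower bound. Taking
`N = diag √p` and `B` realising these minimisers makes the bound an equality, and for that
purification the variance cannot exceed `‖H_tot Φ‖²`, which then equals `F_{H_S}(ρ) / 4`.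
-/

variable {l m n : Type*}

theorem star_mulVec_dotProduct_of_isHermitian [Fintype n] {H : Matrix n n ℂ} (hH : H.IsHermitian)
    (ψ φ : n → ℂ) : star (H *ᵥ ψ) ⬝ᵥ φ = star ψ ⬝ᵥ (H *ᵥ φ) := by
  rw [star_mulVec, hH.eq, dotProduct_mulVec]

theorem varVec_eq_of_isHermitian [Fintype n] {H : Matrix n n ℂ} (hH : H.IsHermitian) (ψ : n → ℂ) :
    varVec H ψ = (star (H *ᵥ ψ) ⬝ᵥ (H *ᵥ ψ)).re - (star ψ ⬝ᵥ (H *ᵥ ψ)).re ^ 2 := by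
  rw [varVec, ← mulVec_mulVec, star_mulVec_dotProduct_of_isHermitian hH]

theorem varVec_le_of_isHermitian [Fintype n] {H : Matrix n n ℂ} (hH : H.IsHermitian) (ψ : n → ℂ) :
    varVec H ψ ≤ (star (H *ᵥ ψ) ⬝ᵥ (H *ᵥ ψ)).re := by
  rw [varVec_eq_of_isHermitian hH]
  nlinarith

theorem varVec_eq_sub_mean [Fintype n] [DecidableEq n] {H : Matrix n n ℂ} (hH : H.IsHermitian)
    {ψ : n → ℂ} (hψ : star ψ ⬝ᵥ ψ = 1) :
    varVec H ψ = (star ((H - ((star ψ ⬝ᵥ (H *ᵥ ψ)).re : ℂ) • 1) *ᵥ ψ) ⬝ᵥ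
      ((H - ((star ψ ⬝ᵥ (H *ᵥ ψ)).re : ℂ) • 1) *ᵥ ψ)).re := by
  set c : ℝ := (star ψ ⬝ᵥ (H *ᵥ ψ)).re with hc
  rw [varVec_eq_of_isHermitian hH, sub_mulVec, smul_mulVec, one_mulVec, star_sub, star_smul,
    Complex.star_def, Complex.conj_ofReal, sub_dotProduct, dotProduct_sub, dotProduct_sub,
    smul_dotProduct, dotProduct_smul, smul_dotProduct, dotProduct_smul,
    star_mulVec_dotProduct_of_isHermitian hH, star_mulVec_dotProduct_of_isHermitian hH, hψ]
  simp only [Complex.sub_re, smul_eq_mul, Complex.re_ofReal_mul, mul_one, Complex.ofReal_re, ← hc]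
  ring

/-- Mathlib's `vec` stacks columns, so the vector `fun q => M q.1 q.2` is `vec Mᵀ`. -/
theorem kronecker_add_mulVec_vec_transpose [Fintype m] [Fintype n] [DecidableEq m]
    [DecidableEq n] (A : Matrix n n ℂ) (B : Matrix m m ℂ) (M : Matrix n m ℂ) :
    (A ⊗ₖ (1 : Matrix m m ℂ) + (1 : Matrix n n ℂ) ⊗ₖ B) *ᵥ vec Mᵀ = vec (A * M + M * Bᵀ)ᵀ := by
  rw [add_mulVec, kronecker_mulVec_vec, kronecker_mulVec_vec, transpose_add, transpose_mul,
    transpose_mul, transpose_transpose, Matrix.one_mul, transpose_one, Matrix.mul_one, vec_add]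

theorem star_vec_transpose_dotProduct [Fintype m] [Fintype n] (X Y : Matrix n m ℂ) :
    star (vec Xᵀ) ⬝ᵥ vec Yᵀ = (Y * Xᴴ).trace := by
  rw [star_vec_dotProduct_vec, ← trace_transpose, transpose_mul, conjTranspose_transpose,
    transpose_transpose]
  rfl

theorem isHermitian_kronecker_one_add_one_kronecker [DecidableEq m] [DecidableEq n]
    {A : Matrix n n ℂ} {B : Matrix m m ℂ} (hA : A.IsHermitian) (hB : B.IsHermitian) :
    (A ⊗ₖ (1 : Matrix m m ℂ) + (1 : Matrix n n ℂ) ⊗ₖ B).IsHermitian := by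
  simp only [IsHermitian, conjTranspose_add, conjTranspose_kronecker, conjTranspose_one, hA.eq,
    hB.eq]

theorem kronecker_one_add_one_kronecker_sub_smul_one [DecidableEq m] [DecidableEq n]
    (A : Matrix n n ℂ) (B : Matrix m m ℂ) (c : ℂ) :
    A ⊗ₖ (1 : Matrix m m ℂ) + (1 : Matrix n n ℂ) ⊗ₖ B - c • 1 =
      A ⊗ₖ (1 : Matrix m m ℂ) + (1 : Matrix n n ℂ) ⊗ₖ (B - c • 1) := by
  simp only [sub_eq_add_neg, ← neg_smul, kronecker_add, kronecker_smul, one_kronecker_one,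
    add_assoc]

theorem sub_sq_div_add_mul_normSq_le {p q : ℝ} (hp : 0 ≤ p) (hq : 0 ≤ q) {z s : ℂ}
    (hs : p = 0 ∨ q = 0 → s = 0) :
    (p - q) ^ 2 / (p + q) * normSq z ≤ normSq (q * z + s) / q + normSq (p * z + s) / p := by
  rcases hp.eq_or_lt with rfl | hp
  · rcases hq.eq_or_lt with rfl | hq
    · simp
    · simp only [hs (Or.inl rfl), add_zero, normSq_mul, normSq_ofReal]
      field_simp
      exact le_of_eq (by ring)
  rcases hq.eq_or_lt with rfl | hq
  · simp only [hs (Or.inr rfl), add_zero, normSq_mul, normSq_ofReal]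
    field_simp
    exact le_of_eq (by ring)
  have key : normSq (q * z + s) / q + normSq (p * z + s) / p - (p - q) ^ 2 / (p + q) * normSq z =
      normSq ((p + q) * s + 2 * p * q * z) / (p * q * (p + q)) := by
    simp only [normSq_apply, add_re, add_im, mul_re, mul_im, ofReal_re, ofReal_im, re_ofNat,
      im_ofNat]
    field_simp
    ring
  have : 0 ≤ normSq ((p + q) * s + 2 * p * q * z) / (p * q * (p + q)) :=
    div_nonneg (normSq_nonneg _) (by positivity)
  linarith

theorem re_trace_mul_conjTranspose_self [Fintype l] [Fintype m] (X : Matrix l m ℂ) :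
    (X * Xᴴ).trace.re = ∑ i, ∑ j, normSq (X i j) := by
  simp [trace, mul_apply, normSq_apply]

theorem re_trace_mul_diagonal_mul_conjTranspose [Fintype l] [Fintype n] [DecidableEq n]
    (T : Matrix l n ℂ) (d : n → ℝ) :
    (T * diagonal (fun j => (d j : ℂ)) * Tᴴ).trace.re = ∑ i, ∑ j, normSq (T i j) * d j := by
  simp only [trace, diag_apply, mul_apply, diagonal_apply, mul_ite, mul_zero, Finset.sum_ite_eq',
    Finset.mem_univ, if_true, conjTranspose_apply, Complex.re_sum]
  refine Finset.sum_congr rfl fun i _ => Finset.sum_congr rfl fun j _ => ?_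
  rw [mul_right_comm, Complex.star_def, Complex.mul_conj, ← Complex.ofReal_mul,
    Complex.ofReal_re]

theorem re_trace_mul_mul_conjTranspose_le [Fintype l] [Fintype m] [DecidableEq m]
    {P : Matrix m m ℂ} (hP : P.IsHermitian) (hPP : IsIdempotentElem P) (K : Matrix l m ℂ) :
    (K * P * Kᴴ).trace.re ≤ (K * Kᴴ).trace.re := by
  have hsplit : K * Kᴴ = K * P * Kᴴ + (K * (1 - P)) * (K * (1 - P))ᴴ := by
    have hQ : (1 - P) * (1 - P)ᴴ = 1 - P := by
      rw [conjTranspose_sub, conjTranspose_one, hP.eq, hPP.one_sub.eq]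
    rw [conjTranspose_mul, ← Matrix.mul_assoc, Matrix.mul_assoc K (1 - P), hQ, Matrix.mul_sub,
      Matrix.sub_mul, Matrix.mul_one]
    abel
  have hrest := (posSemidef_self_mul_conjTranspose (K * (1 - P))).trace_nonneg
  rw [hsplit, trace_add, Complex.add_re]
  linarith [(Complex.nonneg_iff.mp hrest).1]

theorem dotProduct_star_row_of_mul_conjTranspose_eq_diagonal [Fintype m] [DecidableEq n]
    {p : n → ℝ} {N : Matrix n m ℂ} (hN : N * Nᴴ = diagonal fun j => (p j : ℂ)) (j : n) :
    N j ⬝ᵥ star (N j) = p j := by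
  rw [← diagonal_apply_eq (fun j => (p j : ℂ)) j, ← hN, mul_apply']
  rfl

theorem nonneg_of_mul_conjTranspose_eq_diagonal [Fintype m] [DecidableEq n]
    {p : n → ℝ} {N : Matrix n m ℂ} (hN : N * Nᴴ = diagonal fun j => (p j : ℂ)) (j : n) :
    0 ≤ p j := by
  have := dotProduct_self_star_nonneg (N j)
  rwa [dotProduct_star_row_of_mul_conjTranspose_eq_diagonal hN, Complex.zero_le_real] at this

theorem row_eq_zero_of_mul_conjTranspose_eq_diagonal [Fintype m] [DecidableEq n]
    {p : n → ℝ} {N : Matrix n m ℂ} (hN : N * Nᴴ = diagonal fun j => (p j : ℂ)) {j : n}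
    (hj : p j = 0) : N j = 0 :=
  dotProduct_self_star_eq_zero.mp <| by
    rw [dotProduct_star_row_of_mul_conjTranspose_eq_diagonal hN, hj, Complex.ofReal_zero]

/-- Bessel's inequality for the orthogonal rows of `N`; rows with `p j = 0` vanish, matching
`x / 0 = 0`. -/
theorem sum_normSq_mul_conjTranspose_div_le [Fintype l] [Fintype m] [Fintype n] [DecidableEq m]
    [DecidableEq n] {p : n → ℝ} {N : Matrix n m ℂ} (hN : N * Nᴴ = diagonal fun j => (p j : ℂ))
    (K : Matrix l m ℂ) :
    ∑ i, ∑ j, normSq ((K * Nᴴ) i j) / p j ≤ (K * Kᴴ).trace.re := by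
  set E : Matrix n n ℂ := diagonal fun j => ((p j)⁻¹ : ℝ)
  have hE : E * (N * Nᴴ) * E = E := by
    rw [hN, diagonal_mul_diagonal, diagonal_mul_diagonal]
    congr 1
    funext j
    rcases eq_or_ne (p j) 0 with h | h
    · simp [h]
    · rw [← Complex.ofReal_mul, inv_mul_cancel₀ h, Complex.ofReal_one, one_mul]
  have hP : (Nᴴ * E * N).IsHermitian :=
    isHermitian_conjTranspose_mul_mul N (isHermitian_diagonal_of_self_adjoint _ (by
      ext j; simp))
  have hPP : IsIdempotentElem (Nᴴ * E * N) := by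
    calc Nᴴ * E * N * (Nᴴ * E * N) = Nᴴ * (E * (N * Nᴴ) * E) * N := by
          simp only [Matrix.mul_assoc]
      _ = Nᴴ * E * N := by rw [hE]
  have htrace : (K * (Nᴴ * E * N) * Kᴴ).trace.re = ∑ i, ∑ j, normSq ((K * Nᴴ) i j) / p j := by
    have hfactor : K * (Nᴴ * E * N) * Kᴴ = K * Nᴴ * E * (K * Nᴴ)ᴴ := by
      rw [conjTranspose_mul, conjTranspose_conjTranspose]
      simp only [Matrix.mul_assoc]
    simp only [hfactor, E, re_trace_mul_diagonal_mul_conjTranspose, div_eq_mul_inv]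
  rw [← htrace]
  exact re_trace_mul_mul_conjTranspose_le hP hPP K

/-- Terms with `p j + p k = 0` vanish because `x / 0 = 0`; for `0 ≤ p` this is the restriction
`0 < p j + p k` in `qfiOf`. -/
def qfiSum [Fintype n] (p : n → ℝ) (h : Matrix n n ℂ) : ℝ :=
  2 * ∑ j, ∑ k, (p j - p k) ^ 2 / (p j + p k) * normSq (h j k)

theorem sum_sum_add_swap [Fintype n] (f : n → n → ℝ) :
    ∑ j, ∑ k, (f j k + f k j) = 2 * ∑ j, ∑ k, f j k := by
  simp only [Finset.sum_add_distrib]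
  rw [Finset.sum_comm (f := fun j k => f k j)]
  ring

theorem qfiSum_le_four_mul_re_trace [Fintype m] [Fintype n] [DecidableEq m] [DecidableEq n]
    {p : n → ℝ} {N : Matrix n m ℂ} (hN : N * Nᴴ = diagonal fun j => (p j : ℂ))
    {h : Matrix n n ℂ} (hh : h.IsHermitian) {B : Matrix m m ℂ} (hB : B.IsHermitian) :
    qfiSum p h ≤ 4 * ((h * N + N * B) * (h * N + N * B)ᴴ).trace.re := by
  set K := h * N + N * B
  set S := N * B * Nᴴ
  have hp := nonneg_of_mul_conjTranspose_eq_diagonal hN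
  have hT : ∀ j k, (K * Nᴴ) j k = p k * h j k + S j k := by
    intro j k
    rw [show K * Nᴴ = h * (N * Nᴴ) + S by simp only [K, S, Matrix.add_mul, Matrix.mul_assoc], hN]
    simp [mul_diagonal, mul_comm]
  have hS : S.IsHermitian := isHermitian_mul_mul_conjTranspose N hB
  have hS0 : ∀ j k, p j = 0 ∨ p k = 0 → S j k = 0 := by
    rintro j k (hj | hk)
    · simp [S, mul_apply, row_eq_zero_of_mul_conjTranspose_eq_diagonal hN hj]
    · simp [S, mul_apply, row_eq_zero_of_mul_conjTranspose_eq_diagonal hN hk]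
  have hpair : ∀ j k, (p j - p k) ^ 2 / (p j + p k) * normSq (h j k) ≤
      normSq ((K * Nᴴ) j k) / p k + normSq ((K * Nᴴ) k j) / p j := by
    intro j k
    have hswap : (K * Nᴴ) k j = star (p j * h j k + S j k) := by
      rw [hT, ← hh.apply j k, ← hS.apply j k]
      simp
    rw [hT, hswap, Complex.star_def, normSq_conj]
    exact sub_sq_div_add_mul_normSq_le (hp j) (hp k) (hS0 j k)
  calc qfiSum p h ≤ 2 * ∑ j, ∑ k,
        (normSq ((K * Nᴴ) j k) / p k + normSq ((K * Nᴴ) k j) / p j) := by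
        unfold qfiSum
        gcongr with j _ k _
        exact hpair j k
    _ = 4 * ∑ j, ∑ k, normSq ((K * Nᴴ) j k) / p k := by
        rw [sum_sum_add_swap (fun j k => normSq ((K * Nᴴ) j k) / p k)]
        ring
    _ ≤ 4 * (K * Kᴴ).trace.re := by
        gcongr
        exact sum_normSq_mul_conjTranspose_div_le hN K

theorem QFI_eq_qfiSum [Fintype n] [DecidableEq n] {ρ : Matrix n n ℂ} (hρ : ρ.PosSemidef)
    (H : Matrix n n ℂ) :
    QFI hρ.isHermitian H = qfiSum hρ.isHermitian.eigenvalues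
      (star (hρ.isHermitian.eigenvectorUnitary : Matrix n n ℂ) * H *
        hρ.isHermitian.eigenvectorUnitary) := by
  unfold QFI qfiOf qfiSum
  congr 1
  refine Finset.sum_congr rfl fun j _ => Finset.sum_congr rfl fun k _ => ?_
  split_ifs with hjk
  · congr 2
    simp only [mul_apply, star_apply, IsHermitian.eigenvectorUnitary_apply, dotProduct, mulVec,
      Pi.star_apply, Finset.mul_sum, Finset.sum_mul, mul_assoc]
    exact Finset.sum_comm
  · have hsum : hρ.isHermitian.eigenvalues j + hρ.isHermitian.eigenvalues k = 0 :=
      le_antisymm (not_lt.mp hjk) (add_nonneg (hρ.eigenvalues_nonneg j) (hρ.eigenvalues_nonneg k))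
    simp [hsum]

theorem star_eigenvectorUnitary_mul_mul_eigenvectorUnitary [Fintype n] [DecidableEq n]
    {ρ : Matrix n n ℂ} (hρ : ρ.IsHermitian) :
    star (hρ.eigenvectorUnitary : Matrix n n ℂ) * ρ * hρ.eigenvectorUnitary =
      diagonal fun j => (hρ.eigenvalues j : ℂ) := by
  simpa [Function.comp_def] using hρ.conjStarAlgAut_star_eigenvectorUnitary

theorem mul_add_mul_eq_unitary_mul [Fintype m] [Fintype n] [DecidableEq n]
    {U : Matrix n n ℂ} (hU : U ∈ unitaryGroup n ℂ) (A : Matrix n n ℂ) (N : Matrix n m ℂ)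
    (B : Matrix m m ℂ) :
    A * (U * N) + U * N * B = U * (star U * A * U * N + N * B) := by
  rw [Matrix.mul_add, ← Matrix.mul_assoc U (star U * A * U), ← Matrix.mul_assoc U (star U * A),
    ← Matrix.mul_assoc U (star U), (mem_unitaryGroup_iff.mp hU), Matrix.one_mul,
    ← Matrix.mul_assoc, Matrix.mul_assoc A, Matrix.mul_assoc U N B]

theorem trace_unitary_mul_mul_conjTranspose [Fintype m] [Fintype n] [DecidableEq n]
    {U : Matrix n n ℂ} (hU : U ∈ unitaryGroup n ℂ) (X : Matrix n m ℂ) :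
    (U * X * (U * X)ᴴ).trace = (X * Xᴴ).trace := by
  rw [conjTranspose_mul, Matrix.mul_assoc, trace_mul_comm, Matrix.mul_assoc, Matrix.mul_assoc,
    ← star_eq_conjTranspose, mem_unitaryGroup_iff'.mp hU, Matrix.mul_one]

theorem QFI_le_four_mul_re_trace [Fintype m] [Fintype n] [DecidableEq m] [DecidableEq n]
    {ρ : Matrix n n ℂ} (hρ : ρ.PosSemidef) {HS : Matrix n n ℂ} (hHS : HS.IsHermitian)
    {M : Matrix n m ℂ} (hM : M * Mᴴ = ρ) {B : Matrix m m ℂ} (hB : B.IsHermitian) :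
    QFI hρ.isHermitian HS ≤ 4 * ((HS * M + M * B) * (HS * M + M * B)ᴴ).trace.re := by
  set U : Matrix n n ℂ := (hρ.isHermitian.eigenvectorUnitary : Matrix n n ℂ)
  have hU : U ∈ unitaryGroup n ℂ := hρ.isHermitian.eigenvectorUnitary.2
  have hMU : M = U * (star U * M) := by
    rw [← Matrix.mul_assoc, mem_unitaryGroup_iff.mp hU, Matrix.one_mul]
  have hN : star U * M * (star U * M)ᴴ = diagonal fun j => (hρ.isHermitian.eigenvalues j : ℂ) :=
    calc star U * M * (star U * M)ᴴ = star U * (M * Mᴴ) * U := by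
          rw [conjTranspose_mul, star_eq_conjTranspose, conjTranspose_conjTranspose]
          simp only [Matrix.mul_assoc]
      _ = _ := by rw [hM, star_eigenvectorUnitary_mul_mul_eigenvectorUnitary]
  rw [QFI_eq_qfiSum hρ, hMU, mul_add_mul_eq_unitary_mul hU, trace_unitary_mul_mul_conjTranspose hU]
  exact qfiSum_le_four_mul_re_trace hN (isHermitian_conjTranspose_mul_mul _ hHS) hB

/-- With `N = diag √p`, the entries of `N * optimalAncilla p h * Nᴴ` are
`-2 p_j p_k h_jk / (p_j + p_k)`, the minimisers in `sub_sq_div_add_mul_normSq_le`. -/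
def optimalAncilla (p : n → ℝ) (h : Matrix n n ℂ) : Matrix n n ℂ :=
  of fun j k => ((-2 * √(p j) * √(p k) / (p j + p k) : ℝ) : ℂ) * h j k

theorem optimalAncilla_isHermitian {p : n → ℝ} {h : Matrix n n ℂ} (hh : h.IsHermitian) :
    (optimalAncilla p h).IsHermitian := by
  ext j k
  simp only [conjTranspose_apply, optimalAncilla, of_apply, star_mul', hh.apply]
  rw [Complex.star_def, Complex.conj_ofReal, add_comm (p k), mul_right_comm _ √(p k)]

theorem mul_add_mul_optimalAncilla_apply [Fintype n] [DecidableEq n] {p : n → ℝ}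
    (hp : ∀ j, 0 ≤ p j) (h : Matrix n n ℂ) (j k : n) :
    (h * diagonal (fun j => (√(p j) : ℂ)) + diagonal (fun j => (√(p j) : ℂ)) * optimalAncilla p h)
      j k = ((√(p k) * (p k - p j) / (p j + p k) : ℝ) : ℂ) * h j k := by
  have hcoef : √(p k) + √(p j) * (-2 * √(p j) * √(p k) / (p j + p k)) =
      √(p k) * (p k - p j) / (p j + p k) := by
    rcases eq_or_ne (p j + p k) 0 with h0 | h0
    · obtain ⟨hj, hk⟩ : p j = 0 ∧ p k = 0 := ⟨by linarith [hp j, hp k], by linarith [hp j, hp k]⟩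
      simp [hj, hk]
    · field_simp
      rw [Real.sq_sqrt (hp j)]
      ring
  simp only [Matrix.add_apply, mul_diagonal, diagonal_mul, optimalAncilla, of_apply]
  rw [← hcoef]
  push_cast
  ring

theorem four_mul_re_trace_optimalAncilla [Fintype n] [DecidableEq n] {p : n → ℝ}
    (hp : ∀ j, 0 ≤ p j) {h : Matrix n n ℂ} (hh : h.IsHermitian) :
    let N : Matrix n n ℂ := diagonal fun j => (√(p j) : ℂ)
    4 * ((h * N + N * optimalAncilla p h) * (h * N + N * optimalAncilla p h)ᴴ).trace.re =
      qfiSum p h := by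
  intro N
  set f : n → n → ℝ := fun j k => (√(p k) * (p k - p j) / (p j + p k)) ^ 2 * normSq (h j k)
  have hpair : ∀ j k, f j k + f k j = (p j - p k) ^ 2 / (p j + p k) * normSq (h j k) := by
    intro j k
    have hnorm : normSq (h k j) = normSq (h j k) := by
      rw [← hh.apply j k, Complex.star_def, normSq_conj]
    simp only [f, hnorm, div_pow, mul_pow, Real.sq_sqrt (hp j), Real.sq_sqrt (hp k)]
    rcases eq_or_ne (p j + p k) 0 with h0 | h0
    · simp [h0, add_comm (p k)]
    · rw [add_comm (p k)]
      field_simp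
      ring
  rw [re_trace_mul_conjTranspose_self, qfiSum, ← Finset.sum_congr rfl fun j _ =>
    Finset.sum_congr rfl fun k _ => hpair j k, sum_sum_add_swap]
  simp only [N, mul_add_mul_optimalAncilla_apply hp, normSq_mul, normSq_ofReal, f, sq]
  ring

theorem exists_four_mul_re_trace_eq_QFI [Fintype n] [DecidableEq n] {ρ : Matrix n n ℂ}
    (hρ : ρ.PosSemidef) {HS : Matrix n n ℂ} (hHS : HS.IsHermitian) :
    ∃ M B : Matrix n n ℂ, M * Mᴴ = ρ ∧ B.IsHermitian ∧
      4 * ((HS * M + M * B) * (HS * M + M * B)ᴴ).trace.re = QFI hρ.isHermitian HS := by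
  set U : Matrix n n ℂ := (hρ.isHermitian.eigenvectorUnitary : Matrix n n ℂ)
  have hU : U ∈ unitaryGroup n ℂ := hρ.isHermitian.eigenvectorUnitary.2
  set p := hρ.isHermitian.eigenvalues
  set N : Matrix n n ℂ := diagonal fun j => (√(p j) : ℂ)
  have hNN : N * Nᴴ = diagonal fun j => (p j : ℂ) := by
    rw [diagonal_conjTranspose, diagonal_mul_diagonal]
    congr 1
    funext j
    rw [Pi.star_apply, Complex.star_def, Complex.conj_ofReal, ← Complex.ofReal_mul,
      Real.mul_self_sqrt (hρ.eigenvalues_nonneg j)]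
  refine ⟨U * N, optimalAncilla p (star U * HS * U), ?_,
    optimalAncilla_isHermitian (isHermitian_conjTranspose_mul_mul U hHS), ?_⟩
  · calc U * N * (U * N)ᴴ = U * (star U * ρ * U) * star U := by
          rw [star_eigenvectorUnitary_mul_mul_eigenvectorUnitary, ← hNN, conjTranspose_mul,
            star_eq_conjTranspose]
          simp only [Matrix.mul_assoc]
      _ = ρ := by
          rw [← Matrix.mul_assoc, ← Matrix.mul_assoc, mem_unitaryGroup_iff.mp hU,
            Matrix.one_mul, Matrix.mul_assoc, mem_unitaryGroup_iff.mp hU, Matrix.mul_one]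
  · rw [mul_add_mul_eq_unitary_mul hU, trace_unitary_mul_mul_conjTranspose hU, QFI_eq_qfiSum hρ]
    exact four_mul_re_trace_optimalAncilla hρ.eigenvalues_nonneg
      (isHermitian_conjTranspose_mul_mul U hHS)

theorem QFI_le_four_mul_varVec [Fintype m] [Fintype n] [DecidableEq m] [DecidableEq n]
    {ρ : Matrix n n ℂ} (hρ : ρ.PosSemidef) (hρtr : ρ.trace = 1) {HS : Matrix n n ℂ}
    (hHS : HS.IsHermitian) {M : Matrix n m ℂ} (hM : M * Mᴴ = ρ) {HA : Matrix m m ℂ}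
    (hHA : HA.IsHermitian) :
    QFI hρ.isHermitian HS ≤ 4 * varVec (HS ⊗ₖ (1 : Matrix m m ℂ) + (1 : Matrix n n ℂ) ⊗ₖ HA)
      (vec Mᵀ) := by
  have hunit : star (vec Mᵀ) ⬝ᵥ vec Mᵀ = 1 := by rw [star_vec_transpose_dotProduct, hM, hρtr]
  rw [varVec_eq_sub_mean (isHermitian_kronecker_one_add_one_kronecker hHS hHA) hunit,
    kronecker_one_add_one_kronecker_sub_smul_one, kronecker_add_mulVec_vec_transpose,
    star_vec_transpose_dotProduct]
  exact QFI_le_four_mul_re_trace hρ hHS hM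
    (hHA.sub (isHermitian_one.smul (Complex.conj_ofReal _))).transpose

theorem qfi_min_variance_over_purifications
    {d : ℕ} (ρ HS : Matrix (Fin d) (Fin d) ℂ)
    (hρ : ρ.PosSemidef) (hρtr : ρ.trace = 1) (hHS : HS.IsHermitian) :
    (∀ (m : ℕ), 0 < m → ∀ (M : Matrix (Fin d) (Fin m) ℂ), M * Mᴴ = ρ →
      ∀ (HA : Matrix (Fin m) (Fin m) ℂ), HA.IsHermitian →
        QFI hρ.isHermitian HS ≤
          4 * varVec (HS ⊗ₖ (1 : Matrix (Fin m) (Fin m) ℂ) +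
              (1 : Matrix (Fin d) (Fin d) ℂ) ⊗ₖ HA) (fun q => M q.1 q.2)) ∧
    (∃ (M : Matrix (Fin d) (Fin d) ℂ) (HA : Matrix (Fin d) (Fin d) ℂ),
      M * Mᴴ = ρ ∧ HA.IsHermitian ∧
      4 * varVec (HS ⊗ₖ (1 : Matrix (Fin d) (Fin d) ℂ) +
          (1 : Matrix (Fin d) (Fin d) ℂ) ⊗ₖ HA) (fun q => M q.1 q.2) =
        QFI hρ.isHermitian HS) := by
  refine ⟨fun m _ M hM HA hHA => QFI_le_four_mul_varVec hρ hρtr hHS hM hHA, ?_⟩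
  obtain ⟨M, B, hM, hB, hQFI⟩ := exists_four_mul_re_trace_eq_QFI hρ hHS
  refine ⟨M, Bᵀ, hM, hB.transpose, le_antisymm ?_
    (QFI_le_four_mul_varVec hρ hρtr hHS hM hB.transpose)⟩
  calc 4 * varVec (HS ⊗ₖ 1 + 1 ⊗ₖ Bᵀ) (vec Mᵀ)
      ≤ 4 * (star ((HS ⊗ₖ 1 + 1 ⊗ₖ Bᵀ) *ᵥ vec Mᵀ) ⬝ᵥ ((HS ⊗ₖ 1 + 1 ⊗ₖ Bᵀ) *ᵥ vec Mᵀ)).re := by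
        gcongr
        exact varVec_le_of_isHermitian
          (isHermitian_kronecker_one_add_one_kronecker hHS hB.transpose) _
    _ = QFI hρ.isHermitian HS := by
        rw [kronecker_add_mulVec_vec_transpose, star_vec_transpose_dotProduct,
          transpose_transpose, hQFI]

end
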